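/- Let (X,d) be a compact metric space, f_{1,∞} an NDS on X, ψ ∈ C(X,ℝ), and Z a nonempty compact subset of X. Then for every Borel probability measure μ on X with μ(Z) = 1 one has P_μ(X,ψ) ≤ P^B_{f_{1,∞}}(Z,ψ); i.e., P^B_{f_{1,∞}}(Z,ψ) ≥ sup{ P_μ(X,ψ) : μ a Borel probability measure with μ(Z) = 1 }. -/

import Mathlib

open Filter MeasureTheory Set ENNReal

noncomputable section

variable {X : Type} [MetricSpace X]

/-- The iterate `f_1^n = f_n ∘ ⋯ ∘ f_1` of the NDS `f`, where `f 0` is the first map `f_1`. -/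
def nIter (f : ℕ → X → X) : ℕ → X → X
  | 0 => id
  | n + 1 => f n ∘ nIter f n

/-- The Bowen (dynamical) ball `B_n(x, ε)` for the Bowen metric
`d_n(x,y) = max_{0 ≤ j < n} d(f_1^j x, f_1^j y)`. -/
def bowenBall (f : ℕ → X → X) (n : ℕ) (x : X) (ε : ℝ) : Set X :=
  {y | ∀ j < n, dist (nIter f j x) (nIter f j y) < ε}

/-- The Birkhoff sum `S_{1,n} ψ (x) = ∑_{j=0}^{n-1} ψ(f_1^j x)`. -/
def birkSum (f : ℕ → X → X) (ψ : X → ℝ) (n : ℕ) (x : X) : ℝ :=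
  ∑ j ∈ Finset.range n, ψ (nIter f j x)

/-- `S_{1,n} ψ (x, ε) = sup_{y ∈ B_n(x,ε)} S_{1,n} ψ (y)`. -/
def birkSupBall (f : ℕ → X → X) (ψ : X → ℝ) (n : ℕ) (x : X) (ε : ℝ) : ℝ :=
  sSup (birkSum f ψ n '' bowenBall f n x ε)

/-- `M(n, α, ε, Z, ψ)`: infimum of `∑_i exp(-α n_i + S_{1,n_i}ψ(x_i, ε))` over all finite or
countable covers `Z ⊆ ⋃_i B_{n_i}(x_i, ε)` with `n_i ≥ n`. -/
def Mpre (f : ℕ → X → X) (ψ : X → ℝ) (Z : Set X) (n : ℕ) (α ε : ℝ) : ℝ≥0∞ :=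
  sInf { S : ℝ≥0∞ | ∃ (u : Set ℕ) (c : ℕ → X) (m : ℕ → ℕ),
    (∀ i ∈ u, n ≤ m i) ∧ (Z ⊆ ⋃ i ∈ u, bowenBall f (m i) (c i) ε) ∧
    S = ∑' i : u, ENNReal.ofReal (Real.exp (-α * (m i : ℝ) + birkSupBall f ψ (m i) (c i) ε)) }

/-- `𝓜(n, α, ε, Z, ψ)`: as `Mpre` but with the Birkhoff sums evaluated at the centers. -/
def MpreC (f : ℕ → X → X) (ψ : X → ℝ) (Z : Set X) (n : ℕ) (α ε : ℝ) : ℝ≥0∞ :=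
  sInf { S : ℝ≥0∞ | ∃ (u : Set ℕ) (c : ℕ → X) (m : ℕ → ℕ),
    (∀ i ∈ u, n ≤ m i) ∧ (Z ⊆ ⋃ i ∈ u, bowenBall f (m i) (c i) ε) ∧
    S = ∑' i : u, ENNReal.ofReal (Real.exp (-α * (m i : ℝ) + birkSum f ψ (m i) (c i))) }

/-- `M(α, ε, Z, ψ) = lim_{n→∞} M(n, α, ε, Z, ψ)`; the quantity is nondecreasing in `n`,
so the limit is the supremum. -/
def Mlim (f : ℕ → X → X) (ψ : X → ℝ) (Z : Set X) (α ε : ℝ) : ℝ≥0∞ :=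
  ⨆ n : ℕ, Mpre f ψ Z n α ε

/-- `𝓜(α, ε, Z, ψ) = lim_{n→∞} 𝓜(n, α, ε, Z, ψ)`. -/
def MlimC (f : ℕ → X → X) (ψ : X → ℝ) (Z : Set X) (α ε : ℝ) : ℝ≥0∞ :=
  ⨆ n : ℕ, MpreC f ψ Z n α ε

/-- `P^B(ε, Z, ψ) = inf {α : M(α, ε, Z, ψ) = 0}`, as an extended real. -/
def PBeps (f : ℕ → X → X) (ψ : X → ℝ) (Z : Set X) (ε : ℝ) : EReal :=
  sInf (Real.toEReal '' {α : ℝ | Mlim f ψ Z α ε = 0})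

/-- `𝒫^B(ε, Z, ψ) = inf {α : 𝓜(α, ε, Z, ψ) = 0}`. -/
def PBCeps (f : ℕ → X → X) (ψ : X → ℝ) (Z : Set X) (ε : ℝ) : EReal :=
  sInf (Real.toEReal '' {α : ℝ | MlimC f ψ Z α ε = 0})

/-- The Pesin–Pitskel topological pressure `P^B_{f_{1,∞}}(Z, ψ) = lim_{ε→0} P^B(ε, Z, ψ)`. -/
def PB (f : ℕ → X → X) (ψ : X → ℝ) (Z : Set X) : EReal :=
  limUnder (nhdsWithin 0 (Ioi 0)) fun ε : ℝ => PBeps f ψ Z ε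

/-- `W(n, α, ε, Z, ψ)`: the weighted analogue of `Mpre`. -/
def Wpre (f : ℕ → X → X) (ψ : X → ℝ) (Z : Set X) (n : ℕ) (α ε : ℝ) : ℝ≥0∞ :=
  sInf { S : ℝ≥0∞ | ∃ (u : Set ℕ) (cx : ℕ → X) (m : ℕ → ℕ) (c : ℕ → ℝ),
    (∀ i ∈ u, 0 < c i) ∧ (∀ i ∈ u, n ≤ m i) ∧
    (∀ z ∈ Z, 1 ≤ ∑' i : u,
      (bowenBall f (m i) (cx i) ε).indicator (fun _ => ENNReal.ofReal (c i)) z) ∧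
    S = ∑' i : u, ENNReal.ofReal (c i) *
      ENNReal.ofReal (Real.exp (-α * (m i : ℝ) + birkSupBall f ψ (m i) (cx i) ε)) }

/-- `W(α, ε, Z, ψ) = lim_{n→∞} W(n, α, ε, Z, ψ)`. -/
def Wlim (f : ℕ → X → X) (ψ : X → ℝ) (Z : Set X) (α ε : ℝ) : ℝ≥0∞ :=
  ⨆ n : ℕ, Wpre f ψ Z n α ε

/-- `P^W(ε, Z, ψ)`: the critical value of `α` at which `W(α, ε, Z, ψ)` jumps from `∞` to `0`. -/
def PWeps (f : ℕ → X → X) (ψ : X → ℝ) (Z : Set X) (ε : ℝ) : EReal :=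
  sInf (Real.toEReal '' {α : ℝ | Wlim f ψ Z α ε = 0})

/-- The weighted topological pressure `P^W_{f_{1,∞}}(Z, ψ) = lim_{ε→0} P^W(ε, Z, ψ)`. -/
def PW (f : ℕ → X → X) (ψ : X → ℝ) (Z : Set X) : EReal :=
  limUnder (nhdsWithin 0 (Ioi 0)) fun ε : ℝ => PWeps f ψ Z ε

/-- Bowen topological entropy `h^B_top(f_{1,∞}, Z)`, i.e. pressure of the zero potential. -/
def hBtop (f : ℕ → X → X) (Z : Set X) : EReal := PB f (fun _ => 0) Z

/-- Weighted Bowen topological entropy `h^{WB}_top(f_{1,∞}, Z)`. -/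
def hWBtop (f : ℕ → X → X) (Z : Set X) : EReal := PW f (fun _ => 0) Z

/-- `EReal → ℝ≥0∞`, sending `⊤` to `⊤` and everything negative to `0`. -/
def ERealToENNReal (x : EReal) : ℝ≥0∞ := if x = ⊤ then ⊤ else ENNReal.ofReal x.toReal

variable [MeasurableSpace X]

/-- The measure-theoretic local pressure
`P_μ(x,ψ) = lim_{ε→0} liminf_{n→∞} (-log μ(B_n(x,ε)) + S_{1,n}ψ(x))/n`. -/
def Ploc (f : ℕ → X → X) (μ : Measure X) (ψ : X → ℝ) (x : X) : EReal :=
  limUnder (nhdsWithin 0 (Ioi 0)) fun ε : ℝ =>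
    Filter.atTop.liminf fun n : ℕ =>
      (((n : ℝ)⁻¹ : ℝ) : EReal) *
        (-(ENNReal.log (μ (bowenBall f n x ε))) + ((birkSum f ψ n x : ℝ) : EReal))

/-- The integral of an extended-real-valued function: the difference of the lower integrals of
its positive and negative parts. -/
def ERealIntegral (μ : Measure X) (g : X → EReal) : EReal :=
  ((∫⁻ x, ERealToENNReal (g x) ∂μ : ℝ≥0∞) : EReal)
    - ((∫⁻ x, ERealToENNReal (-(g x)) ∂μ : ℝ≥0∞) : EReal)

/-- The measure-theoretic pressure `P_μ(X, ψ) = ∫ P_μ(x, ψ) dμ(x)`. -/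
def Pmeas (f : ℕ → X → X) (μ : Measure X) (ψ : X → ℝ) : EReal :=
  ERealIntegral μ (Ploc f μ ψ)

/-- The measure-theoretic local lower entropy `h̲_μ(f_{1,∞}, x)`. -/
def hloc (f : ℕ → X → X) (μ : Measure X) (x : X) : EReal := Ploc f μ (fun _ => 0) x

/-- The measure-theoretic lower entropy `h̲_μ(f_{1,∞}) = ∫ h̲_μ(f_{1,∞}, x) dμ(x)`. -/
def hmeas (f : ℕ → X → X) (μ : Measure X) : EReal := Pmeas f μ (fun _ => 0)


/-! If `s < P_μ(X, ψ)`, the local pressure at some fixed scale `ε₀` exceeds `s` on a set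
`A ⊆ Z` of positive measure. For `α < s`, every point `x ∈ A` eventually satisfies
`μ(B_n(x, 2ε)) ≤ exp(-α n + S_{1,n}ψ(x))` when `2ε ≤ ε₀`, so on a piece of `A` of positive
measure this holds for all `n ≥ N`; by the mass distribution principle every cover admissible
for `M(N, α, ε, Z, ψ)` then has weight at least the measure of that piece, hence
`P^B(ε, Z, ψ) ≥ s` for all small `ε`.

That the limit `ε → 0` defining `P^B` exists comes from the variant `𝒫^B(ε, Z, ψ)` with
Birkhoff sums at the centres: it is monotone in `ε`, and differs from `P^B(ε, Z, ψ)` by at most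
the oscillation of `ψ` on `ε`-balls. -/

open Topology

lemma EReal.tendsto_of_tendsto_of_le_of_le_add {ι : Type*} {l : Filter ι} {g h : ι → EReal}
    {L : EReal} (hg : Tendsto g l (𝓝 L)) (hgh : ∀ᶠ i in l, g i ≤ h i)
    (hhg : ∀ δ : ℝ, 0 < δ → ∀ᶠ i in l, h i ≤ g i + δ) : Tendsto h l (𝓝 L) := by
  refine tendsto_order.2 ⟨fun a ha => ?_, fun b hb => ?_⟩
  · filter_upwards [(tendsto_order.1 hg).1 a ha, hgh] with i hgi hghi using hgi.trans_le hghi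
  obtain ⟨r, hLr, hrb⟩ := EReal.exists_between_coe_real hb
  obtain ⟨r', hrr', hr'b⟩ := EReal.exists_between_coe_real hrb
  have hδ : (0 : ℝ) < r' - r := _root_.sub_pos.2 (EReal.coe_lt_coe_iff.1 hrr')
  filter_upwards [(tendsto_order.1 hg).2 r hLr, hhg _ hδ] with i hgi hhi
  calc h i ≤ g i + (r' - r : ℝ) := hhi
    _ < r + (r' - r : ℝ) := EReal.add_lt_add_right_coe hgi _
    _ = r' := by rw [← EReal.coe_add, add_sub_cancel]
    _ < b := hr'b

section
omit [MeasurableSpace X]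

variable {f : ℕ → X → X} {ψ : X → ℝ} {Z : Set X} {n N : ℕ} {x y : X} {α δ ε ε' : ℝ}

lemma mem_bowenBall_self (hε : 0 < ε) : x ∈ bowenBall f n x ε :=
  fun j _ => by simpa using hε

lemma bowenBall_mono (h : ε ≤ ε') : bowenBall f n x ε ⊆ bowenBall f n x ε' :=
  fun _ hy j hj => (hy j hj).trans_le h

lemma bowenBall_subset_of_mem (hy : y ∈ bowenBall f n x ε) :
    bowenBall f n x ε ⊆ bowenBall f n y (2 * ε) := by
  intro z hz j hj
  calc dist (nIter f j y) (nIter f j z)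
      ≤ dist (nIter f j x) (nIter f j y) + dist (nIter f j x) (nIter f j z) :=
        dist_triangle_left _ _ _
    _ < 2 * ε := by linarith [hy j hj, hz j hj]

lemma birkSum_le_birkSupBall (hψ : BddAbove (range ψ)) (hy : y ∈ bowenBall f n x ε) :
    birkSum f ψ n y ≤ birkSupBall f ψ n x ε := by
  obtain ⟨C, hC⟩ := hψ
  refine le_csSup ⟨n * C, forall_mem_image.2 fun z _ => ?_⟩ (mem_image_of_mem _ hy)
  calc birkSum f ψ n z ≤ ∑ _j ∈ Finset.range n, C :=
        Finset.sum_le_sum fun j _ => hC (mem_range_self _)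
    _ = n * C := by simp

lemma birkSum_le_add_of_mem_bowenBall (hosc : ∀ a b, dist a b < ε → ψ b ≤ ψ a + δ)
    (hy : y ∈ bowenBall f n x ε) : birkSum f ψ n y ≤ birkSum f ψ n x + n * δ :=
  calc birkSum f ψ n y ≤ ∑ j ∈ Finset.range n, (ψ (nIter f j x) + δ) :=
        Finset.sum_le_sum fun j hj => hosc _ _ (hy j (Finset.mem_range.1 hj))
    _ = birkSum f ψ n x + n * δ := by simp [birkSum, Finset.sum_add_distrib]

lemma birkSupBall_le_add (hε : 0 < ε) (hosc : ∀ a b, dist a b < ε → ψ b ≤ ψ a + δ) :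
    birkSupBall f ψ n x ε ≤ birkSum f ψ n x + n * δ :=
  csSup_le ((Set.nonempty_of_mem (mem_bowenBall_self hε)).image _)
    (forall_mem_image.2 fun _ hy => birkSum_le_add_of_mem_bowenBall hosc hy)

def coverMass (f : ℕ → X → X) (Z : Set X) (N : ℕ) (ε : ℝ) (w : ℕ → X → ℝ) : ℝ≥0∞ :=
  sInf { S : ℝ≥0∞ | ∃ (u : Set ℕ) (c : ℕ → X) (m : ℕ → ℕ),
    (∀ i ∈ u, N ≤ m i) ∧ (Z ⊆ ⋃ i ∈ u, bowenBall f (m i) (c i) ε) ∧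
    S = ∑' i : u, ENNReal.ofReal (Real.exp (w (m i) (c i))) }

lemma Mpre_eq_coverMass :
    Mpre f ψ Z N α ε = coverMass f Z N ε (fun m x => -α * m + birkSupBall f ψ m x ε) := rfl

lemma MpreC_eq_coverMass :
    MpreC f ψ Z N α ε = coverMass f Z N ε (fun m x => -α * m + birkSum f ψ m x) := rfl

lemma coverMass_mono {w w' : ℕ → X → ℝ} (h : ∀ m x, w m x ≤ w' m x) :
    coverMass f Z N ε w ≤ coverMass f Z N ε w' := by
  refine le_sInf ?_
  rintro _ ⟨u, c, m, hm, hcov, rfl⟩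
  refine sInf_le_of_le ⟨u, c, m, hm, hcov, rfl⟩ (ENNReal.tsum_le_tsum fun i => ?_)
  exact ENNReal.ofReal_le_ofReal (Real.exp_le_exp.2 (h _ _))

lemma coverMass_anti_radius {w : ℕ → X → ℝ} (h : ε' ≤ ε) :
    coverMass f Z N ε w ≤ coverMass f Z N ε' w :=
  sInf_le_sInf fun _ ⟨u, c, m, hm, hcov, hS⟩ =>
    ⟨u, c, m, hm, hcov.trans (iUnion₂_mono fun _ _ => bowenBall_mono h), hS⟩

def criticalValue (M : ℝ → ℝ≥0∞) : EReal :=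
  sInf (Real.toEReal '' {α | M α = 0})

lemma criticalValue_mono {M M' : ℝ → ℝ≥0∞} (h : ∀ α, M α ≤ M' α) :
    criticalValue M ≤ criticalValue M' :=
  sInf_le_sInf (image_mono fun α hα => nonpos_iff_eq_zero.1 (hα ▸ h α))

lemma criticalValue_le_add {M M' : ℝ → ℝ≥0∞} (h : ∀ α, M (α + δ) ≤ M' α) :
    criticalValue M ≤ criticalValue M' + δ := by
  rw [← EReal.sub_le_iff_le_add (.inl (EReal.coe_ne_bot δ)) (.inl (EReal.coe_ne_top δ))]
  refine le_sInf (forall_mem_image.2 fun α hα => ?_)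
  rw [EReal.sub_le_iff_le_add (.inl (EReal.coe_ne_bot δ)) (.inl (EReal.coe_ne_top δ))]
  exact sInf_le ⟨α + δ, nonpos_iff_eq_zero.1 (hα ▸ h α), EReal.coe_add α δ⟩

lemma le_criticalValue {M : ℝ → ℝ≥0∞} {s : ℝ} (h : ∀ α, M α = 0 → s ≤ α) :
    (s : EReal) ≤ criticalValue M :=
  le_sInf (forall_mem_image.2 fun α hα => EReal.coe_le_coe_iff.2 (h α hα))

lemma PBeps_eq_criticalValue : PBeps f ψ Z ε = criticalValue fun α => Mlim f ψ Z α ε := rfl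

lemma PBCeps_eq_criticalValue : PBCeps f ψ Z ε = criticalValue fun α => MlimC f ψ Z α ε := rfl

lemma PBCeps_le_PBeps (hψ : BddAbove (range ψ)) (hε : 0 < ε) :
    PBCeps f ψ Z ε ≤ PBeps f ψ Z ε := by
  rw [PBCeps_eq_criticalValue, PBeps_eq_criticalValue]
  exact criticalValue_mono fun _ => iSup_mono fun _ => by
    rw [MpreC_eq_coverMass, Mpre_eq_coverMass]
    exact coverMass_mono fun _ _ =>
      add_le_add_right (birkSum_le_birkSupBall hψ (mem_bowenBall_self hε)) _

lemma PBeps_le_PBCeps_add (hε : 0 < ε) (hosc : ∀ a b, dist a b < ε → ψ b ≤ ψ a + δ) :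
    PBeps f ψ Z ε ≤ PBCeps f ψ Z ε + δ := by
  rw [PBCeps_eq_criticalValue, PBeps_eq_criticalValue]
  exact criticalValue_le_add fun _ => iSup_mono fun _ => by
    rw [MpreC_eq_coverMass, Mpre_eq_coverMass]
    exact coverMass_mono fun m x => by
      linarith [birkSupBall_le_add (f := f) (n := m) (x := x) hε hosc]

lemma antitone_PBCeps : Antitone (PBCeps f ψ Z) := fun _ _ h => by
  rw [PBCeps_eq_criticalValue, PBCeps_eq_criticalValue]
  exact criticalValue_mono fun _ => iSup_mono fun _ => by
    simpa only [MpreC_eq_coverMass] using coverMass_anti_radius h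

lemma tendsto_PBeps_PB (hψb : BddAbove (range ψ)) (hψ : UniformContinuous ψ) :
    Tendsto (PBeps f ψ Z) (𝓝[>] 0) (𝓝 (PB f ψ Z)) := by
  have hlim : Tendsto (PBeps f ψ Z) (𝓝[>] 0) (𝓝 (sSup (PBCeps f ψ Z '' Ioi 0))) := by
    refine EReal.tendsto_of_tendsto_of_le_of_le_add (antitone_PBCeps.tendsto_nhdsGT 0) ?_
      fun δ hδ => ?_
    · filter_upwards [self_mem_nhdsWithin] with ε hε using PBCeps_le_PBeps hψb hε
    obtain ⟨ε₁, hε₁, hψε₁⟩ := Metric.uniformContinuous_iff.1 hψ δ hδ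
    filter_upwards [Ioo_mem_nhdsGT hε₁] with ε hε
    refine PBeps_le_PBCeps_add hε.1 fun a b hab => ?_
    have := hψε₁ (hab.trans hε.2)
    rw [Real.dist_eq] at this
    linarith [abs_lt.1 this]
  rwa [show PB f ψ Z = _ from hlim.limUnder_eq]

end

section
omit [MetricSpace X]

lemma ERealToENNReal_le_ofReal {y : EReal} {s : ℝ} (h : y ≤ s) :
    ERealToENNReal y ≤ ENNReal.ofReal s := by
  induction y using EReal.rec with
  | bot => simp [ERealToENNReal]
  | coe t => simpa [ERealToENNReal] using ENNReal.ofReal_le_ofReal (EReal.coe_le_coe_iff.1 h)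
  | top => simp at h

lemma ofReal_le_ERealToENNReal {y : EReal} {r : ℝ} (h : r ≤ y) :
    ENNReal.ofReal r ≤ ERealToENNReal y := by
  induction y using EReal.rec with
  | bot => simp at h
  | coe t => simpa [ERealToENNReal] using ENNReal.ofReal_le_ofReal (EReal.coe_le_coe_iff.1 h)
  | top => simp [ERealToENNReal]

lemma ERealIntegral_le_of_ae_le (μ : Measure X) [IsProbabilityMeasure μ] {g : X → EReal}
    {s : ℝ} (h : ∀ᵐ x ∂μ, g x ≤ s) : ERealIntegral μ g ≤ s := by
  have hpos : ∫⁻ x, ERealToENNReal (g x) ∂μ ≤ ENNReal.ofReal s := by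
    simpa using lintegral_mono_ae (h.mono fun x hx => ERealToENNReal_le_ofReal hx)
  have hneg : ENNReal.ofReal (-s) ≤ ∫⁻ x, ERealToENNReal (-g x) ∂μ := by
    simpa using lintegral_mono_ae (μ := μ) (f := fun _ => ENNReal.ofReal (-s))
      (h.mono fun x hx => ofReal_le_ERealToENNReal (by simpa using EReal.neg_le_neg_iff.2 hx))
  calc ERealIntegral μ g ≤ (ENNReal.ofReal s : EReal) - (ENNReal.ofReal (-s) : EReal) :=
        EReal.sub_le_sub (EReal.coe_ennreal_le_coe_ennreal_iff.2 hpos)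
          (EReal.coe_ennreal_le_coe_ennreal_iff.2 hneg)
    _ = s := by
        rw [EReal.coe_ennreal_ofReal, EReal.coe_ennreal_ofReal, ← EReal.coe_sub,
          max_zero_sub_max_neg_zero_eq_self]

lemma measure_pos_of_lt_ERealIntegral (μ : Measure X) [IsProbabilityMeasure μ]
    {g : X → EReal} {s : ℝ} (hs : s < ERealIntegral μ g) : 0 < μ {x | (s : EReal) < g x} := by
  refine pos_iff_ne_zero.2 fun h0 => hs.not_ge (ERealIntegral_le_of_ae_le μ ?_)
  rw [ae_iff]
  simpa using h0

end

variable {f : ℕ → X → X} {ψ : X → ℝ} {Z : Set X} {N : ℕ} {x : X} {ε : ℝ}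

lemma measure_le_coverMass (μ : Measure X) {D : Set X} (hDZ : D ⊆ Z) {w : ℕ → X → ℝ}
    (hball : ∀ n ≥ N, ∀ c, μ (D ∩ bowenBall f n c ε) ≤ ENNReal.ofReal (Real.exp (w n c))) :
    μ D ≤ coverMass f Z N ε w := by
  refine le_sInf ?_
  rintro _ ⟨u, c, m, hm, hcov, rfl⟩
  have hDcov : D ⊆ ⋃ i ∈ u, D ∩ bowenBall f (m i) (c i) ε := fun x hx => by
    obtain ⟨i, hi, hxi⟩ := mem_iUnion₂.1 (hcov (hDZ hx))
    exact mem_iUnion₂.2 ⟨i, hi, hx, hxi⟩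
  calc μ D ≤ μ (⋃ i ∈ u, D ∩ bowenBall f (m i) (c i) ε) := measure_mono hDcov
    _ ≤ ∑' i : u, μ (D ∩ bowenBall f (m i) (c i) ε) := measure_biUnion_le μ u.to_countable _
    _ ≤ _ := ENNReal.tsum_le_tsum fun i => hball _ (hm i i.2) _

def PlocEps (f : ℕ → X → X) (μ : Measure X) (ψ : X → ℝ) (x : X) (ε : ℝ) : EReal :=
  atTop.liminf fun n : ℕ =>
    (((n : ℝ)⁻¹ : ℝ) : EReal) *
      (-(ENNReal.log (μ (bowenBall f n x ε))) + ((birkSum f ψ n x : ℝ) : EReal))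

lemma antitone_PlocEps (μ : Measure X) : Antitone (PlocEps f μ ψ x) := fun _ _ h =>
  liminf_le_liminf (Eventually.of_forall fun n => mul_le_mul_of_nonneg_left
    (add_le_add_left (EReal.neg_le_neg_iff.2
      (ENNReal.log_monotone (measure_mono (bowenBall_mono h)))) _)
    (EReal.coe_nonneg.2 (by positivity)))

lemma tendsto_PlocEps_Ploc (μ : Measure X) :
    Tendsto (PlocEps f μ ψ x) (𝓝[>] 0) (𝓝 (Ploc f μ ψ x)) := by
  have hlim := (antitone_PlocEps (f := f) (ψ := ψ) (x := x) μ).tendsto_nhdsGT 0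
  rwa [show Ploc f μ ψ x = _ from hlim.limUnder_eq]

lemma exists_nat_lt_PlocEps (μ : Measure X) {s : EReal} (hs : s < Ploc f μ ψ x) :
    ∃ k : ℕ, s < PlocEps f μ ψ x (1 / (k + 1)) := by
  obtain ⟨ε, hsε, hε⟩ :=
    ((tendsto_PlocEps_Ploc μ).eventually (lt_mem_nhds hs)).and self_mem_nhdsWithin |>.exists
  obtain ⟨k, hk⟩ := exists_nat_one_div_lt hε
  exact ⟨k, hsε.trans_le (antitone_PlocEps μ hk.le)⟩

lemma le_ofReal_exp_of_lt_inv_mul {a : ℝ≥0∞} {b α : ℝ} {n : ℕ} (hn : 0 < n)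
    (h : (α : EReal) < (((n : ℝ)⁻¹ : ℝ) : EReal) * (-ENNReal.log a + (b : EReal))) :
    a ≤ ENNReal.ofReal (Real.exp (-α * n + b)) := by
  have hn' : (0 : ℝ) < n := Nat.cast_pos.2 hn
  rw [← ENNReal.exp_log a]
  generalize ENNReal.log a = l at h
  induction l using EReal.rec with
  | bot => simp
  | coe l =>
    rw [← EReal.coe_neg, ← EReal.coe_add, ← EReal.coe_mul, EReal.coe_lt_coe_iff, inv_mul_eq_div,
      lt_div_iff₀ hn'] at h
    rw [EReal.exp_coe]
    gcongr
    linarith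
  | top => simp [EReal.coe_mul_bot_of_pos (inv_pos.2 hn')] at h

lemma le_PBeps (hψ : BddAbove (range ψ)) (μ : Measure X) {s : ℝ}
    (hpos : 0 < μ {x | x ∈ Z ∧ (s : EReal) < PlocEps f μ ψ x (2 * ε)}) :
    (s : EReal) ≤ PBeps f ψ Z ε := by
  rw [PBeps_eq_criticalValue]
  refine le_criticalValue fun α hα => ?_
  by_contra! hαs
  set A := {x | x ∈ Z ∧ (s : EReal) < PlocEps f μ ψ x (2 * ε)}
  set D : ℕ → Set X := fun N => {x | x ∈ A ∧ ∀ n ≥ N,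
    μ (bowenBall f n x (2 * ε)) ≤ ENNReal.ofReal (Real.exp (-α * n + birkSum f ψ n x))}
  have hAD : A ⊆ ⋃ N, D N := fun x hx => by
    obtain ⟨N, hN⟩ := eventually_atTop.1 <|
      (eventually_lt_of_lt_liminf ((EReal.coe_lt_coe_iff.2 hαs).trans hx.2)).and
        (eventually_gt_atTop 0)
    exact mem_iUnion.2 ⟨N, hx, fun n hn => le_ofReal_exp_of_lt_inv_mul (hN n hn).2 (hN n hn).1⟩
  obtain ⟨N, hN⟩ := exists_measure_pos_of_not_measure_iUnion_null
    (hpos.trans_le (measure_mono hAD)).ne'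
  have hDN : μ (D N) ≤ Mpre f ψ Z N α ε := by
    rw [Mpre_eq_coverMass]
    refine measure_le_coverMass μ (fun x hx => hx.1.1) fun n hn c => ?_
    rcases (D N ∩ bowenBall f n c ε).eq_empty_or_nonempty with hempty | ⟨y, hyD, hyc⟩
    · simp [hempty]
    calc μ (D N ∩ bowenBall f n c ε) ≤ μ (bowenBall f n y (2 * ε)) :=
          measure_mono (inter_subset_right.trans (bowenBall_subset_of_mem hyc))
      _ ≤ ENNReal.ofReal (Real.exp (-α * n + birkSum f ψ n y)) := hyD.2 n hn
      _ ≤ ENNReal.ofReal (Real.exp (-α * n + birkSupBall f ψ n c ε)) := by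
          gcongr
          exact birkSum_le_birkSupBall hψ hyc
  exact hN.ne' (nonpos_iff_eq_zero.1 (hα ▸ le_iSup_of_le N hDN))

lemma le_PB_of_measure_pos (hψ : BddAbove (range ψ))
    (hPB : Tendsto (PBeps f ψ Z) (𝓝[>] 0) (𝓝 (PB f ψ Z))) (μ : Measure X) {s ε₀ : ℝ}
    (hε₀ : 0 < ε₀) (hpos : 0 < μ {x | x ∈ Z ∧ (s : EReal) < PlocEps f μ ψ x ε₀}) :
    (s : EReal) ≤ PB f ψ Z := by
  refine ge_of_tendsto hPB ?_
  filter_upwards [Ioc_mem_nhdsGT (half_pos hε₀)] with ε hε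
  refine le_PBeps hψ μ (hpos.trans_le (measure_mono fun x hx => ⟨hx.1, hx.2.trans_le ?_⟩))
  exact antitone_PlocEps μ (by linarith [hε.2])

lemma Pmeas_le_PB (hψ : BddAbove (range ψ))
    (hPB : Tendsto (PBeps f ψ Z) (𝓝[>] 0) (𝓝 (PB f ψ Z))) (hZ : MeasurableSet Z)
    (μ : Measure X) [IsProbabilityMeasure μ] (hμZ : μ Z = 1) : Pmeas f μ ψ ≤ PB f ψ Z := by
  refine EReal.ge_of_forall_gt_iff_ge.1 fun s hs => ?_
  have hG : 0 < μ ({x | (s : EReal) < Ploc f μ ψ x} ∩ Z) := by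
    rw [measure_inter_conull ((prob_compl_eq_zero_iff hZ).2 hμZ)]
    exact measure_pos_of_lt_ERealIntegral μ hs
  have hGsub : {x | (s : EReal) < Ploc f μ ψ x} ∩ Z ⊆
      ⋃ k : ℕ, {x | x ∈ Z ∧ (s : EReal) < PlocEps f μ ψ x (1 / (k + 1))} := fun x hx => by
    obtain ⟨k, hk⟩ := exists_nat_lt_PlocEps μ hx.1
    exact mem_iUnion.2 ⟨k, hx.2, hk⟩
  obtain ⟨k, hk⟩ := exists_measure_pos_of_not_measure_iUnion_null
    (hG.trans_le (measure_mono hGsub)).ne'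
  exact le_PB_of_measure_pos hψ hPB μ Nat.one_div_pos_of_nat hk

theorem statement18_general [CompactSpace X] [BorelSpace X]
    (f : ℕ → X → X) (ψ : X → ℝ) (hψ : Continuous ψ)
    (Z : Set X) (hZ : IsCompact Z) :
    (∀ μ : Measure X, IsProbabilityMeasure μ → μ Z = 1 → Pmeas f μ ψ ≤ PB f ψ Z) ∧
      (⨆ (μ : Measure X) (_ : IsProbabilityMeasure μ) (_ : μ Z = 1), Pmeas f μ ψ) ≤
        PB f ψ Z := by
  have hψb : BddAbove (range ψ) := (isCompact_range hψ).bddAbove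
  have hPB : Tendsto (PBeps f ψ Z) (𝓝[>] 0) (𝓝 (PB f ψ Z)) :=
    tendsto_PBeps_PB hψb (CompactSpace.uniformContinuous_of_continuous hψ)
  have key : ∀ μ : Measure X, IsProbabilityMeasure μ → μ Z = 1 → Pmeas f μ ψ ≤ PB f ψ Z :=
    fun μ _ hμZ => Pmeas_le_PB hψb hPB hZ.isClosed.measurableSet μ hμZ
  exact ⟨key, iSup₂_le fun μ hμ => iSup_le (key μ hμ)⟩

/-- Lower bound half of the variational principle: for every Borel
probability measure `μ` with `μ(Z) = 1` one has `P_μ(X,ψ) ≤ P^B(Z,ψ)`; i.e. `P^B(Z,ψ)`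
dominates the supremum of the measure-theoretic pressures. -/
theorem statement18 [CompactSpace X] [BorelSpace X]
    (f : ℕ → X → X) (hf : ∀ n, Continuous (f n)) (ψ : X → ℝ) (hψ : Continuous ψ)
    (Z : Set X) (hZne : Z.Nonempty) (hZ : IsCompact Z) :
    (∀ μ : Measure X, IsProbabilityMeasure μ → μ Z = 1 → Pmeas f μ ψ ≤ PB f ψ Z) ∧
      (⨆ (μ : Measure X) (_ : IsProbabilityMeasure μ) (_ : μ Z = 1), Pmeas f μ ψ) ≤
        PB f ψ Z :=
  statement18_general f ψ hψ Z hZ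

end
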